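/- Let (Σ, τ) be a subshift with complexity function ρ satisfying ((log n)/n)² ρ(n) → 0, and let S be a finite symmetric subset of [[τ]]. Fix L ≥ 1 and let A_n be the set of g in the group generated by S of word length at most n such that k_g is constant on every cylinder of depth ⌈√(L n log n)⌉. Then |A_n| ≤ (2Kn+1)^{ρ(2⌈√(L n log n)⌉+1)}, where K = max_{s∈S} max_x |k_s(x)|; consequently (1/n) log |A_n| → 0. -/

import Mathlib

open Filter

/-- The shift on bi-infinite sequences, as a bijection. -/
def shiftE {A : Type*} : (ℤ → A) ≃ (ℤ → A) where
  toFun x i := x (i + 1)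
  invFun x i := x (i - 1)
  left_inv x := by funext i; simp
  right_inv x := by funext i; simp

/-- The cylinder of depth `l` determined by the word `w`, inside the subshift `Sub`. -/
def cylinder {A : Type*} (Sub : Set (ℤ → A)) (w : ℤ → A) (l : ℕ) : Set (ℤ → A) :=
  {x ∈ Sub | ∀ i : ℤ, |i| ≤ (l : ℤ) → x i = w i}

/-- The complexity function of a subshift: the number of words of length `m` appearing as
subwords of elements of `Sub`. -/
noncomputable def complexity {A : Type*} (Sub : Set (ℤ → A)) (m : ℕ) : ℕ :=
  Nat.card {w : Fin m → A // ∃ x ∈ Sub, ∃ t : ℤ, ∀ i : Fin m, x (t + i) = w i}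

/-- The depth `⌈√(L n log n)⌉` used for the cylinders defining `A_n`. -/
noncomputable def cylDepth (L : ℝ) (n : ℕ) : ℕ := ⌈Real.sqrt (L * n * Real.log n)⌉₊

/-- The set `A_n`: elements of word length at most `n` (w.r.t. `S`) whose cocycle is
constant on every cylinder of depth `⌈√(L n log n)⌉`. -/
def goodSet {A : Type*} (Sub : Set (ℤ → A)) (S : Finset (Equiv.Perm ↥Sub))
    (k : Equiv.Perm ↥Sub → ↥Sub → ℤ) (L : ℝ) (n : ℕ) : Set (Equiv.Perm ↥Sub) :=
  {g | (∃ l : List (Equiv.Perm ↥Sub), (∀ s ∈ l, s ∈ S) ∧ l.length ≤ n ∧ l.prod = g) ∧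
    ∀ w : ℤ → A, ∀ x y : ↥Sub, (x : ℤ → A) ∈ cylinder Sub w (cylDepth L n) →
      (y : ℤ → A) ∈ cylinder Sub w (cylDepth L n) → k g x = k g y}


/-!
An element of the group generated by `S` is determined by its cocycle `k g`. For `g ∈ A_n` this
cocycle is constant on cylinders of depth `l = ⌈√(L n log n)⌉`, so it is determined by its
values on the `ρ(2l+1)` central words of length `2l+1`, and these values lie in `[-Kn, Kn]`.
That bound is clear for the cocycle obtained by summing the cocycles of the letters along a word
for `g`, and it passes to the continuous cocycle `k g` because two cocycles of `g` differ only at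
periodic points, and periodic points are not isolated.

For the asymptotics, `m = 2l+1` satisfies `m² = O(L n log n)` and `log m ≥ (log n)/2`, so
`log (2Kn+1) / n = O((log m / m)²)` and `(1/n) log |A_n| = O((log m / m)² ρ(m)) → 0`.
-/

open Filter Function Set Topology

theorem Function.Periodic.abs_period {α β : Type*} [AddGroup α] [LinearOrder α] {f : α → β}
    {c : α} (h : Periodic f c) : Periodic f |c| := by
  rcases abs_choice c with hc | hc <;> rw [hc]
  exacts [h, h.neg]

theorem Function.Periodic.eq_of_eqOn_Ico {α β : Type*} [AddCommGroup α] [LinearOrder α]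
    [IsOrderedAddMonoid α] [Archimedean α] {f g : α → β} {c a : α}
    (hf : Periodic f c) (hg : Periodic g c) (hc : 0 < c) (h : EqOn f g (Ico a (a + c))) :
    f = g := by
  funext x
  rw [← toIcoMod_add_toIcoDiv_zsmul hc a x, hf.zsmul, hg.zsmul]
  exact h (toIcoMod_mem_Ico hc a x)

/-- A weak form of the Fine–Wilf theorem. -/
theorem Function.Periodic.eq_of_eqOn_Ico_of_periodic {α β : Type*} [AddCommGroup α]
    [LinearOrder α] [IsOrderedAddMonoid α] [Archimedean α] {f g : α → β} {p q a : α}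
    (hf : Periodic f p) (hg : Periodic g q) (hp : 0 < p) (hq : 0 < q)
    (h : EqOn f g (Ico a (a + p + q))) : f = g := by
  have hfq : Periodic f q := by
    have key : (fun x => f (x + q)) = f :=
      (hf.add_const q).eq_of_eqOn_Ico (a := a) hf hp fun y ⟨hy₁, hy₂⟩ => by
        show f (y + q) = f y
        rw [h ⟨by grind, by grind⟩, hg, ← h ⟨hy₁, by grind⟩]
    exact fun x => congrFun key x
  exact hfq.eq_of_eqOn_Ico hg hq fun y ⟨hy₁, hy₂⟩ => h ⟨hy₁, by grind⟩

theorem shiftE_zpow_apply {A : Type*} (s : ℤ) (x : ℤ → A) (i : ℤ) :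
    (shiftE ^ s) x i = x (i + s) := by
  induction s using Int.induction_on generalizing x i with
  | zero => simp
  | succ n ih =>
    rw [zpow_add_one, Equiv.Perm.mul_apply, ih]
    exact congrArg x (add_assoc _ _ _)
  | pred n ih =>
    rw [zpow_sub_one, Equiv.Perm.mul_apply, ih]
    exact congrArg x (by ring)

section OrbitCocycle

variable {A : Type*} {Sub : Set (ℤ → A)}

def IsOrbitCocycle (g : Equiv.Perm Sub) (c : Sub → ℤ) : Prop :=
  ∀ x, ((g x : Sub) : ℤ → A) = (shiftE ^ c x) (x : ℤ → A)

namespace IsOrbitCocycle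

variable {g h : Equiv.Perm Sub} {c d : Sub → ℤ}

theorem one : IsOrbitCocycle (1 : Equiv.Perm Sub) 0 := fun x => by simp

theorem mul (hc : IsOrbitCocycle g c) (hd : IsOrbitCocycle h d) :
    IsOrbitCocycle (g * h) (fun x => c (h x) + d x) := fun x => by
  rw [Equiv.Perm.mul_apply, hc, hd, zpow_add, Equiv.Perm.mul_apply]

theorem perm_eq (hg : IsOrbitCocycle g c) (hh : IsOrbitCocycle h c) : g = h :=
  Equiv.ext fun x => Subtype.ext <| (hg x).trans (hh x).symm

theorem periodic_sub (hc : IsOrbitCocycle g c) (hd : IsOrbitCocycle g d) (x : Sub) :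
    Periodic (x : ℤ → A) (c x - d x) := fun i => by
  have := congrFun ((hc x).symm.trans (hd x)) (i - d x)
  rw [shiftE_zpow_apply, shiftE_zpow_apply, sub_add_cancel] at this
  rw [← this]
  ring_nf

end IsOrbitCocycle

theorem exists_isOrbitCocycle_list_prod {K : ℤ} {l : List (Equiv.Perm Sub)}
    (hl : ∀ s ∈ l, ∃ c, IsOrbitCocycle s c ∧ ∀ x, |c x| ≤ K) :
    ∃ d, IsOrbitCocycle l.prod d ∧ ∀ x, |d x| ≤ K * l.length := by
  induction l with
  | nil => exact ⟨0, .one, fun x => by simp⟩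
  | cons s t ih =>
    obtain ⟨c, hc, hcK⟩ := hl s List.mem_cons_self
    obtain ⟨d, hd, hdK⟩ := ih fun s hs => hl s (List.mem_cons_of_mem _ hs)
    refine ⟨_, List.prod_cons (a := s) ▸ hc.mul hd, fun x => ?_⟩
    calc |c (t.prod x) + d x| ≤ |c (t.prod x)| + |d x| := abs_add_le _ _
      _ ≤ K + K * t.length := add_le_add (hcK _) (hdK x)
      _ = K * (s :: t).length := by push_cast [List.length_cons]; ring

/-- Where a continuous cocycle `c` and a bounded cocycle `d` differ, the point is periodic,
hence a limit of other points; near it these have the same value of `c`, so they are periodic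
too, with periods so short that they must coincide with the point. -/
theorem IsOrbitCocycle.abs_le [TopologicalSpace A] [DiscreteTopology A]
    (hiso : ∀ x ∈ Sub, (∃ n : ℤ, n ≠ 0 ∧ (shiftE ^ n) x = x) → x ∈ closure (Sub \ {x}))
    {g : Equiv.Perm Sub} {c d : Sub → ℤ} (hc : IsOrbitCocycle g c) (hcc : Continuous c)
    (hd : IsOrbitCocycle g d) {B : ℤ} (hB : ∀ x, |d x| ≤ B) (x : Sub) : |c x| ≤ B := by
  by_contra! hx
  have hne : ∀ z, c z = c x → c z - d z ≠ 0 := fun z hz h => by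
    rw [sub_eq_zero] at h
    exact (hB z).not_gt (h ▸ hz ▸ hx)
  have hle : ∀ z, c z = c x → |c z - d z| ≤ |c x| + B := fun z hz => by
    rw [← hz]
    exact (abs_sub _ _).trans (by linarith [hB z])
  set M := 2 * (|c x| + B)
  have hnear : ∀ᶠ z in 𝓝 x, c z = c x ∧ ∀ i ∈ Ico 0 M, (z : ℤ → A) i = (x : ℤ → A) i :=
    (((IsLocallyConstant.iff_continuous _).2 hcc).eventually_eq x).and <|
      (eventually_all_finite (finite_Ico 0 M)).2 fun i _ =>
        ((IsLocallyConstant.iff_continuous _).2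
          ((continuous_apply i).comp continuous_subtype_val)).eventually_eq x
  have hxcl : x ∈ closure {z : Sub | z ≠ x} := by
    rw [closure_subtype]
    convert hiso x x.2 ⟨_, hne x rfl, funext fun i => by
      rw [shiftE_zpow_apply]; exact hc.periodic_sub hd x i⟩ using 2
    ext y
    simp [Subtype.ext_iff, and_comm]
  obtain ⟨y, hyx, hyc, hwin⟩ :=
    ((mem_closure_iff_frequently.1 hxcl).and_eventually hnear).exists
  refine hyx (Subtype.ext (Periodic.eq_of_eqOn_Ico_of_periodic (a := 0)
    (hc.periodic_sub hd y).abs_period (hc.periodic_sub hd x).abs_period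
    (abs_pos.2 (hne y hyc)) (abs_pos.2 (hne x rfl)) fun i hi => hwin i ⟨hi.1, ?_⟩))
  linarith [hle y hyc, hle x rfl, hi.2]

end OrbitCocycle

theorem Nat.card_le_pow_card_range_of_factors {ι α β γ : Type*} {Φ : ι → α → γ}
    (hΦ : Injective Φ) (r : α → β) {T : Set γ} [Finite T] [Finite (range r)]
    (hfac : ∀ i x y, r x = r y → Φ i x = Φ i y) (hT : ∀ i x, Φ i x ∈ T) :
    Nat.card ι ≤ Nat.card T ^ Nat.card (range r) := by
  let F : ι → range r → T := fun i b => ⟨Φ i b.2.choose, hT _ _⟩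
  have hF : Injective F := fun i j hij => hΦ <| funext fun x => by
    let b : range r := ⟨r x, x, rfl⟩
    have hx : r b.2.choose = r x := b.2.choose_spec
    calc Φ i x = Φ i b.2.choose := (hfac i _ _ hx).symm
      _ = Φ j b.2.choose := congrArg Subtype.val (congrFun hij b)
      _ = Φ j x := hfac j _ _ hx
  exact (Nat.card_le_card_of_injective F hF).trans_eq Nat.card_fun

def window {A : Type*} (l : ℕ) (x : ℤ → A) : Fin (2 * l + 1) → A := fun i => x (-l + i)

theorem eq_of_window_eq {A : Type*} {l : ℕ} {x y : ℤ → A} (h : window l x = window l y)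
    {i : ℤ} (hi : |i| ≤ l) : x i = y i := by
  rw [abs_le] at hi
  have := congrFun h ⟨(i + l).toNat, by omega⟩
  simpa [window, Int.toNat_of_nonneg (by omega : 0 ≤ i + l)] using this

theorem natCard_range_window_le_complexity {A : Type*} [Finite A] (Sub : Set (ℤ → A))
    (l : ℕ) :
    Nat.card (range fun x : Sub => window l (x : ℤ → A)) ≤ complexity Sub (2 * l + 1) := by
  refine Nat.card_le_card_of_injective (fun w => ⟨w.1, ?_⟩) fun v w h => ?_
  · obtain ⟨x, hx⟩ := w.2
    exact ⟨x, x.2, -l, fun i => by rw [← hx]; rfl⟩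
  · exact Subtype.ext (congrArg Subtype.val h :)

section GoodSet

variable {A : Type*} {Sub : Set (ℤ → A)}
  {S : Finset (Equiv.Perm Sub)} {k : Equiv.Perm Sub → Sub → ℤ}

theorem mem_closure_of_mem_goodSet {L : ℝ} {n : ℕ} {g : Equiv.Perm Sub}
    (hg : g ∈ goodSet Sub S k L n) : g ∈ Subgroup.closure (S : Set (Equiv.Perm Sub)) := by
  obtain ⟨⟨l, hl, -, rfl⟩, -⟩ := hg
  exact Subgroup.list_prod_mem _ fun s hs => Subgroup.subset_closure (hl s hs)

theorem abs_le_of_mem_goodSet [TopologicalSpace A] [DiscreteTopology A]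
    (hiso : ∀ x ∈ Sub, (∃ n : ℤ, n ≠ 0 ∧ (shiftE ^ n) x = x) → x ∈ closure (Sub \ {x}))
    (hk : ∀ g ∈ Subgroup.closure (S : Set (Equiv.Perm Sub)), IsOrbitCocycle g (k g))
    (hkcont : ∀ g ∈ Subgroup.closure (S : Set (Equiv.Perm Sub)), Continuous (k g))
    {K : ℕ} (hK : ∀ s ∈ S, ∀ x, |k s x| ≤ (K : ℤ)) {L : ℝ} {n : ℕ} {g : Equiv.Perm Sub}
    (hg : g ∈ goodSet Sub S k L n) (x : Sub) : |k g x| ≤ K * n := by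
  have hgS := mem_closure_of_mem_goodSet hg
  obtain ⟨⟨l, hl, hln, rfl⟩, -⟩ := hg
  obtain ⟨d, hd, hdK⟩ := exists_isOrbitCocycle_list_prod (K := K) fun s hs =>
    ⟨k s, hk s (Subgroup.subset_closure (hl s hs)), hK s (hl s hs)⟩
  exact ((hk _ hgS).abs_le hiso (hkcont _ hgS) hd hdK x).trans (by gcongr)

theorem natCard_goodSet_le [Finite A] [TopologicalSpace A] [DiscreteTopology A]
    (hiso : ∀ x ∈ Sub, (∃ n : ℤ, n ≠ 0 ∧ (shiftE ^ n) x = x) → x ∈ closure (Sub \ {x}))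
    (hk : ∀ g ∈ Subgroup.closure (S : Set (Equiv.Perm Sub)), IsOrbitCocycle g (k g))
    (hkcont : ∀ g ∈ Subgroup.closure (S : Set (Equiv.Perm Sub)), Continuous (k g))
    {K : ℕ} (hK : ∀ s ∈ S, ∀ x, |k s x| ≤ (K : ℤ)) (L : ℝ) (n : ℕ) :
    Nat.card (goodSet Sub S k L n) ≤
      (2 * K * n + 1) ^ complexity Sub (2 * cylDepth L n + 1) := by
  have hinj : Injective fun g : goodSet Sub S k L n => k g := fun g h (hgh : k g = k h) =>
    Subtype.ext <| (hk g (mem_closure_of_mem_goodSet g.2)).perm_eq <| by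
      rw [hgh]; exact hk h (mem_closure_of_mem_goodSet h.2)
  have hfac : ∀ (g : goodSet Sub S k L n) (x y : Sub),
      window (cylDepth L n) (x : ℤ → A) = window (cylDepth L n) y → k g x = k g y :=
    fun g x y hxy => g.2.2 x x y ⟨x.2, fun _ _ => rfl⟩
      ⟨y.2, fun _ hi => (eq_of_window_eq hxy hi).symm⟩
  have hval : ∀ (g : goodSet Sub S k L n) x, k g x ∈ Icc (-(K * n : ℤ)) (K * n) :=
    fun g x => abs_le.1 (abs_le_of_mem_goodSet hiso hk hkcont hK g.2 x)
  calc Nat.card (goodSet Sub S k L n)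
      ≤ Nat.card (Icc (-(K * n : ℤ)) (K * n)) ^
          Nat.card (range fun x : Sub => window (cylDepth L n) (x : ℤ → A)) :=
        Nat.card_le_pow_card_range_of_factors hinj _ hfac hval
    _ ≤ (2 * K * n + 1) ^ complexity Sub (2 * cylDepth L n + 1) := by
        rw [Nat.card_eq_fintype_card, Fintype.card_Icc, Int.card_Icc,
          show (K * n : ℤ) + 1 - -(K * n) = ((2 * K * n + 1 : ℕ) : ℤ) by push_cast; ring,
          Int.toNat_natCast]
        exact Nat.pow_le_pow_right (by omega) (natCard_range_window_le_complexity _ _)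

end GoodSet

section Asymptotics

theorem one_le_log_natCast {n : ℕ} (hn : 3 ≤ n) : 1 ≤ Real.log n := by
  rw [Real.le_log_iff_exp_le (by positivity)]
  calc Real.exp 1 ≤ 3 := (Real.exp_one_lt_d9.trans (by norm_num)).le
    _ ≤ n := by exact_mod_cast hn

theorem log_two_mul_mul_add_one_le (K : ℕ) {n : ℕ} (hn : 3 ≤ n) :
    Real.log (2 * K * n + 1) ≤ (Real.log (2 * K + 1) + 1) * Real.log n := by
  have hn1 : (1 : ℝ) ≤ n := by exact_mod_cast (by omega : 1 ≤ n)
  have hK : 0 ≤ Real.log (2 * K + 1) := Real.log_nonneg (by linarith [K.cast_nonneg (α := ℝ)])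
  calc Real.log (2 * K * n + 1) ≤ Real.log ((2 * K + 1) * n) :=
        Real.log_le_log (by positivity) (by nlinarith [K.cast_nonneg (α := ℝ)])
    _ = Real.log (2 * K + 1) + Real.log n := Real.log_mul (by positivity) (by positivity)
    _ ≤ (Real.log (2 * K + 1) + 1) * Real.log n := by nlinarith [one_le_log_natCast hn]

theorem sqrt_le_cylDepth {L : ℝ} (hL : 1 ≤ L) {n : ℕ} (hn : 3 ≤ n) :
    √(n : ℝ) ≤ cylDepth L n := by
  have h : (n : ℝ) ≤ L * n * Real.log n := by
    have := one_le_log_natCast hn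
    have : (1 : ℝ) ≤ L * Real.log n := one_le_mul_of_one_le_of_one_le hL this
    nlinarith [n.cast_nonneg (α := ℝ)]
  exact (Real.sqrt_le_sqrt h).trans (Nat.le_ceil _)

theorem tendsto_two_mul_cylDepth_add_one_atTop {L : ℝ} (hL : 1 ≤ L) :
    Tendsto (fun n => 2 * cylDepth L n + 1) atTop atTop := by
  rw [← tendsto_natCast_atTop_iff (R := ℝ)]
  refine tendsto_atTop_mono' _ ?_ (Real.tendsto_sqrt_atTop.comp tendsto_natCast_atTop_atTop)
  filter_upwards [eventually_ge_atTop 3] with n hn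
  have := sqrt_le_cylDepth hL hn
  simp only [Function.comp_apply]
  push_cast
  linarith

/-- With `m = 2⌈√(L n log n)⌉ + 1` one has `√n ≤ m ≤ 5√(L n log n)`, so `log m ≥ (log n)/2`
and `(log m / m)² ≥ log n / (100 L n)`. -/
theorem log_div_le_sq_log_div_cylDepth {L : ℝ} (hL : 1 ≤ L) {n : ℕ} (hn : 3 ≤ n) :
    Real.log n / n ≤ 100 * L *
      (Real.log (2 * cylDepth L n + 1 : ℕ) / (2 * cylDepth L n + 1 : ℕ)) ^ 2 := by
  set m : ℝ := ((2 * cylDepth L n + 1 : ℕ) : ℝ)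
  set s := √(L * n * Real.log n)
  have hn0 : (0 : ℝ) < n := by exact_mod_cast (by omega : 0 < n)
  have hlog := one_le_log_natCast hn
  have hs2 : s ^ 2 = L * n * Real.log n := Real.sq_sqrt (by positivity)
  have hs1 : 1 ≤ s := Real.one_le_sqrt.2 <| one_le_mul_of_one_le_of_one_le
    (one_le_mul_of_one_le_of_one_le hL (by exact_mod_cast (by omega : 1 ≤ n))) hlog
  have hsqrt : √(n : ℝ) ≤ m := by
    have := sqrt_le_cylDepth hL hn
    simp only [m]; push_cast; linarith
  have hm5 : m ≤ 5 * s := by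
    have := Nat.ceil_lt_add_one (Real.sqrt_nonneg (L * n * Real.log n))
    simp only [m, cylDepth] at this ⊢; push_cast; linarith
  have hm0 : 0 < m := by positivity
  have hlogm : Real.log n / 2 ≤ Real.log m := by
    rw [← Real.log_sqrt hn0.le]
    exact Real.log_le_log (by positivity) hsqrt
  rw [div_pow, div_le_iff₀ hn0]
  calc Real.log n = 100 * L * (Real.log n / 2) ^ 2 * n / (25 * (L * n * Real.log n)) := by
        field_simp; ring
    _ ≤ 100 * L * Real.log m ^ 2 * n / m ^ 2 := by
        gcongr
        rw [← hs2]
        nlinarith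
    _ = _ := by ring

theorem tendsto_log_div_of_le_pow {ρ m a : ℕ → ℕ} {K : ℕ} {C : ℝ}
    (hρ : Tendsto (fun j : ℕ => (Real.log j / j) ^ 2 * ρ j) atTop (𝓝 0))
    (hm : Tendsto m atTop atTop)
    (hmC : ∀ᶠ n : ℕ in atTop, Real.log n / n ≤ C * (Real.log (m n) / m n) ^ 2)
    (ha : ∀ n, a n ≤ (2 * K * n + 1) ^ ρ (m n)) :
    Tendsto (fun n : ℕ => Real.log (a n) / n) atTop (𝓝 0) := by
  set D := Real.log (2 * K + 1) + 1
  have hD : 0 ≤ D := add_nonneg (Real.log_nonneg (by linarith [K.cast_nonneg (α := ℝ)])) one_pos.le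
  have hlim : Tendsto (fun n => D * C * ((Real.log (m n) / m n) ^ 2 * ρ (m n))) atTop (𝓝 0) := by
    simpa using (hρ.comp hm).const_mul (D * C)
  refine squeeze_zero' (.of_forall fun n => div_nonneg (Real.log_natCast_nonneg _) n.cast_nonneg)
    ?_ hlim
  filter_upwards [eventually_ge_atTop 3, hmC] with n hn hnC
  have hlog : Real.log (a n) ≤ ρ (m n) * Real.log (2 * K * n + 1) := by
    rcases (a n).eq_zero_or_pos with h0 | hpos
    · rw [h0, Nat.cast_zero, Real.log_zero]
      exact mul_nonneg (Nat.cast_nonneg _) (Real.log_nonneg (le_add_of_nonneg_left (by positivity)))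
    · rw [← Real.log_pow]
      exact Real.log_le_log (by exact_mod_cast hpos) (by exact_mod_cast ha n)
  calc Real.log (a n) / n ≤ ρ (m n) * (D * (Real.log n / n)) := by
        rw [mul_div_assoc', ← mul_div_assoc]
        gcongr
        exact hlog.trans (mul_le_mul_of_nonneg_left (log_two_mul_mul_add_one_le K hn)
          (Nat.cast_nonneg _))
    _ ≤ ρ (m n) * (D * (C * (Real.log (m n) / m n) ^ 2)) := by gcongr
    _ = D * C * ((Real.log (m n) / m n) ^ 2 * ρ (m n)) := by ring

end Asymptotics

theorem goodSet_card_bound_general {A : Type*} [Fintype A]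
    [TopologicalSpace A] [DiscreteTopology A]
    (Sub : Set (ℤ → A))
    (hiso : ∀ x ∈ Sub, (∃ n : ℤ, n ≠ 0 ∧ (shiftE ^ n) x = x) → x ∈ closure (Sub \ {x}))
    (hρ : Tendsto (fun m : ℕ => (Real.log m / m) ^ 2 * complexity Sub m) atTop (nhds 0))
    (S : Finset (Equiv.Perm ↥Sub))
    (k : Equiv.Perm ↥Sub → ↥Sub → ℤ)
    (hk : ∀ g ∈ Subgroup.closure (S : Set (Equiv.Perm ↥Sub)), ∀ x : ↥Sub,
      ((g x : ↥Sub) : ℤ → A) = (shiftE ^ k g x) (x : ℤ → A))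
    (hkcont : ∀ g ∈ Subgroup.closure (S : Set (Equiv.Perm ↥Sub)), Continuous (k g))
    (K : ℕ) (hK : ∀ s ∈ S, ∀ x : ↥Sub, |k s x| ≤ (K : ℤ))
    (L : ℝ) (hL : 1 ≤ L) :
    (∀ n : ℕ, Nat.card (goodSet Sub S k L n) ≤
        (2 * K * n + 1) ^ complexity Sub (2 * cylDepth L n + 1)) ∧
    Tendsto (fun n : ℕ => Real.log (Nat.card (goodSet Sub S k L n)) / n) atTop (nhds 0) := by
  have hcard := natCard_goodSet_le hiso hk hkcont hK L
  refine ⟨hcard, tendsto_log_div_of_le_pow (C := 100 * L) hρ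
    (tendsto_two_mul_cylDepth_add_one_atTop hL) ?_ hcard⟩
  filter_upwards [eventually_ge_atTop 3] with n hn
  exact log_div_le_sq_log_div_cylDepth hL hn

/-- if the complexity ρ of the subshift satisfies ((log n)/n)² ρ(n) → 0, then
|A_n| ≤ (2Kn+1)^{ρ(2⌈√(L n log n)⌉+1)}, and consequently (1/n) log |A_n| → 0. -/
theorem goodSet_card_bound {A : Type*} [Fintype A]
    [TopologicalSpace A] [DiscreteTopology A]
    (Sub : Set (ℤ → A)) (hclosed : IsClosed Sub) (hinv : shiftE '' Sub = Sub)
    (hiso : ∀ x ∈ Sub, (∃ n : ℤ, n ≠ 0 ∧ (shiftE ^ n) x = x) → x ∈ closure (Sub \ {x}))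
    (hρ : Tendsto (fun m : ℕ => (Real.log m / m) ^ 2 * complexity Sub m) atTop (nhds 0))
    (S : Finset (Equiv.Perm ↥Sub)) (hSsymm : ∀ s ∈ S, s⁻¹ ∈ S)
    (k : Equiv.Perm ↥Sub → ↥Sub → ℤ)
    (hk : ∀ g ∈ Subgroup.closure (S : Set (Equiv.Perm ↥Sub)), ∀ x : ↥Sub,
      ((g x : ↥Sub) : ℤ → A) = (shiftE ^ k g x) (x : ℤ → A))
    (hkcont : ∀ g ∈ Subgroup.closure (S : Set (Equiv.Perm ↥Sub)), Continuous (k g))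
    (K : ℕ) (hK : ∀ s ∈ S, ∀ x : ↥Sub, |k s x| ≤ (K : ℤ))
    (L : ℝ) (hL : 1 ≤ L) :
    (∀ n : ℕ, Nat.card (goodSet Sub S k L n) ≤
        (2 * K * n + 1) ^ complexity Sub (2 * cylDepth L n + 1)) ∧
    Tendsto (fun n : ℕ => Real.log (Nat.card (goodSet Sub S k L n)) / n) atTop (nhds 0) :=
  goodSet_card_bound_general Sub hiso hρ S k hk hkcont K hK L hL
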